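/- Let B and D be random vectors and W the Moore–Penrose inverse of Var(D). Then the matrix Var(B) − Cov(B,D)·W·Cov(D,B) (the adjusted variance Var_D(B)) is positive semidefinite; in particular, adjustment by D never increases uncertainty about any linear combination of the components of B. -/

import Mathlib

open MeasureTheory Matrix

variable {Ω : Type*}

/-- The covariance matrix of two random vectors `B` (dimension `m`) and `D` (dimension `n`):
the `(i,j)` entry is `E[Bᵢ·Dⱼ] − E[Bᵢ]·E[Dⱼ]`. -/
noncomputable def cov [MeasurableSpace Ω] (μ : Measure Ω) {m n : ℕ}
    (B : Fin m → Ω → ℝ) (D : Fin n → Ω → ℝ) : Matrix (Fin m) (Fin n) ℝ :=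
  Matrix.of fun i j =>
    (∫ ω, B i ω * D j ω ∂μ) - (∫ ω, B i ω ∂μ) * (∫ ω, D j ω ∂μ)

/-- `W` is a Moore–Penrose inverse of `V`. -/
def IsMoorePenrose {m n : ℕ} (V : Matrix (Fin m) (Fin n) ℝ)
    (W : Matrix (Fin n) (Fin m) ℝ) : Prop :=
  V * W * V = V ∧ W * V * W = W ∧ (V * W)ᵀ = V * W ∧ (W * V)ᵀ = W * V

/-- The adjusted expectation `E_D(B)` (computed with the matrix `W`, intended to be the
Moore–Penrose inverse of `Var(D)`): the `i`-th component is
`E[Bᵢ] + Σ_j (Cov(B,D)·W)_{ij}·(Dⱼ − E[Dⱼ])`. -/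
noncomputable def adjExp [MeasurableSpace Ω] (μ : Measure Ω) {m n : ℕ}
    (B : Fin m → Ω → ℝ) (D : Fin n → Ω → ℝ)
    (W : Matrix (Fin n) (Fin n) ℝ) : Fin m → Ω → ℝ :=
  fun i ω => (∫ ω', B i ω' ∂μ) + ∑ j, (cov μ B D * W) i j * (D j ω - ∫ ω', D j ω' ∂μ)

/-- The adjusted covariance `Cov_D(B,C) = Cov(B − E_D(B), C − E_D(C))`. -/
noncomputable def adjCov [MeasurableSpace Ω] (μ : Measure Ω) {m p n : ℕ}
    (B : Fin m → Ω → ℝ) (C : Fin p → Ω → ℝ) (D : Fin n → Ω → ℝ)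
    (W : Matrix (Fin n) (Fin n) ℝ) : Matrix (Fin m) (Fin p) ℝ :=
  cov μ (fun i ω => B i ω - adjExp μ B D W i ω) (fun j ω => C j ω - adjExp μ C D W j ω)

/-
With `K = Cov(B,D)·W`, the residual `B − K·D` has covariance
`Var(B) − K·Cov(D,B) − Cov(B,D)·Kᵀ + K·Var(D)·Kᵀ`. The Moore–Penrose inverse of a symmetric matrix
is symmetric (it is unique, and `Wᵀ` is one as well), so `Kᵀ = W·Cov(D,B)`, and `W·Var(D)·W = W`;
hence this covariance is exactly `Var(B) − Cov(B,D)·W·Cov(D,B)`, and covariance matrices are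
positive semidefinite.
-/

open ProbabilityTheory

namespace IsMoorePenrose

variable {m n : ℕ} {V : Matrix (Fin m) (Fin n) ℝ} {W W' : Matrix (Fin n) (Fin m) ℝ}

theorem transpose (h : IsMoorePenrose V W) : IsMoorePenrose Vᵀ Wᵀ := by
  obtain ⟨hVWV, hWVW, hVW, hWV⟩ := h
  refine ⟨?_, ?_, ?_, ?_⟩
  · rw [← transpose_mul, ← transpose_mul, ← Matrix.mul_assoc, hVWV]
  · rw [← transpose_mul, ← transpose_mul, ← Matrix.mul_assoc, hWVW]
  · rw [← transpose_mul, transpose_transpose, hWV]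
  · rw [← transpose_mul, transpose_transpose, hVW]

theorem unique (h : IsMoorePenrose V W) (h' : IsMoorePenrose V W') : W = W' := by
  obtain ⟨hVWV, hWVW, hVW, hWV⟩ := h
  obtain ⟨hVWV', hWVW', hVW', hWV'⟩ := h'
  have hVW_eq : V * W = V * W' :=
    calc V * W = (V * W')ᵀ * (V * W)ᵀ := by
          rw [hVW, hVW', ← Matrix.mul_assoc, hVWV']
      _ = V * W' := by rw [← transpose_mul, ← Matrix.mul_assoc, hVWV, hVW']
  have hWV_eq : W * V = W' * V :=
    calc W * V = (W * V)ᵀ * (W' * V)ᵀ := by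
          rw [hWV, hWV', Matrix.mul_assoc, ← Matrix.mul_assoc V, hVWV']
      _ = W' * V := by rw [← transpose_mul, Matrix.mul_assoc, ← Matrix.mul_assoc V, hVWV, hWV']
  calc W = W * V * W := hWVW.symm
    _ = W' * V * W' := by rw [Matrix.mul_assoc, hVW_eq, ← Matrix.mul_assoc, hWV_eq]
    _ = W' := hWVW'

theorem transpose_eq_self {V W : Matrix (Fin n) (Fin n) ℝ} (hV : Vᵀ = V)
    (h : IsMoorePenrose V W) : Wᵀ = W :=
  (hV ▸ h.transpose).unique h

end IsMoorePenrose

section Covariance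

variable [MeasurableSpace Ω] {μ : Measure Ω} {m n p : ℕ}

theorem memLp_sum_mul {ι : Type*} [Fintype ι] {q : ENNReal} (c : ι → ℝ) {X : ι → Ω → ℝ}
    (hX : ∀ k, MemLp (X k) q μ) : MemLp (fun ω => ∑ k, c k * X k ω) q μ :=
  memLp_finsetSum _ fun k _ => (hX k).const_mul _

theorem cov_transpose (B : Fin m → Ω → ℝ) (D : Fin n → Ω → ℝ) :
    (cov μ B D)ᵀ = cov μ D B := by
  ext i j
  simp only [cov, transpose_apply, of_apply, mul_comm]

variable [IsProbabilityMeasure μ] {B : Fin m → Ω → ℝ} {D : Fin n → Ω → ℝ}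

theorem cov_apply_eq_covariance (hB : ∀ i, MemLp (B i) 2 μ) (hD : ∀ j, MemLp (D j) 2 μ)
    (i : Fin m) (j : Fin n) : cov μ B D i j = cov[B i, D j; μ] := by
  rw [covariance_eq_sub (hB i) (hD j)]
  rfl

theorem cov_sub_left {B' : Fin m → Ω → ℝ} (hB : ∀ i, MemLp (B i) 2 μ)
    (hB' : ∀ i, MemLp (B' i) 2 μ) (hD : ∀ j, MemLp (D j) 2 μ) :
    cov μ (fun i ω => B i ω - B' i ω) D = cov μ B D - cov μ B' D := by
  ext i j
  calc cov μ (fun i ω => B i ω - B' i ω) D i j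
      = cov[fun ω => B i ω - B' i ω, D j; μ] :=
        cov_apply_eq_covariance (fun i => (hB i).sub (hB' i)) hD i j
    _ = (cov μ B D - cov μ B' D) i j := by
        rw [covariance_fun_sub_left (hB i) (hB' i) (hD j), Matrix.sub_apply,
          cov_apply_eq_covariance hB hD, cov_apply_eq_covariance hB' hD]

theorem cov_mul_left (K : Matrix (Fin p) (Fin m) ℝ) (hB : ∀ i, MemLp (B i) 2 μ)
    (hD : ∀ j, MemLp (D j) 2 μ) :
    cov μ (fun i ω => ∑ k, K i k * B k ω) D = K * cov μ B D := by
  ext i j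
  calc cov μ (fun i ω => ∑ k, K i k * B k ω) D i j
      = cov[fun ω => ∑ k, K i k * B k ω, D j; μ] :=
        cov_apply_eq_covariance (fun i => memLp_sum_mul (K i) hB) hD i j
    _ = (K * cov μ B D) i j := by
        simp only [covariance_fun_sum_left (fun k => (hB k).const_mul _) (hD j),
          covariance_const_mul_left, mul_apply, cov_apply_eq_covariance hB hD]

theorem cov_sub_right {D' : Fin n → Ω → ℝ} (hB : ∀ i, MemLp (B i) 2 μ)
    (hD : ∀ j, MemLp (D j) 2 μ) (hD' : ∀ j, MemLp (D' j) 2 μ) :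
    cov μ B (fun j ω => D j ω - D' j ω) = cov μ B D - cov μ B D' := by
  rw [← cov_transpose, cov_sub_left hD hD' hB, transpose_sub, cov_transpose, cov_transpose]

theorem cov_mul_right (K : Matrix (Fin p) (Fin n) ℝ) (hB : ∀ i, MemLp (B i) 2 μ)
    (hD : ∀ j, MemLp (D j) 2 μ) :
    cov μ B (fun j ω => ∑ k, K j k * D k ω) = cov μ B D * Kᵀ := by
  rw [← cov_transpose, cov_mul_left K hD hB, transpose_mul, cov_transpose]

theorem cov_residual (K : Matrix (Fin m) (Fin n) ℝ) (hB : ∀ i, MemLp (B i) 2 μ)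
    (hD : ∀ j, MemLp (D j) 2 μ) :
    cov μ (fun i ω => B i ω - ∑ k, K i k * D k ω) (fun i ω => B i ω - ∑ k, K i k * D k ω)
      = cov μ B B - K * cov μ D B - cov μ B D * Kᵀ + K * cov μ D D * Kᵀ := by
  have hKD : ∀ i, MemLp (fun ω => ∑ k, K i k * D k ω) 2 μ := fun i => memLp_sum_mul (K i) hD
  have hR : ∀ i, MemLp (fun ω => B i ω - ∑ k, K i k * D k ω) 2 μ := fun i => (hB i).sub (hKD i)
  rw [cov_sub_left hB hKD hR, cov_mul_left K hD hR,
    cov_sub_right hB hB hKD, cov_sub_right hD hB hKD, cov_mul_right K hB hD,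
    cov_mul_right K hD hD]
  simp only [Matrix.mul_sub, Matrix.mul_assoc]
  abel

theorem posSemidef_cov_self (hB : ∀ i, MemLp (B i) 2 μ) : (cov μ B B).PosSemidef := by
  rw [posSemidef_iff_dotProduct_mulVec]
  refine ⟨(conjTranspose_eq_transpose_of_trivial _).trans (cov_transpose B B), fun x => ?_⟩
  have hxB : ∀ i, MemLp (fun ω => x i * B i ω) 2 μ := fun i => (hB i).const_mul _
  have hvar : x ⬝ᵥ (cov μ B B *ᵥ x)
      = cov[fun ω => ∑ i, x i * B i ω, fun ω => ∑ j, x j * B j ω; μ] := by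
    simp only [covariance_fun_sum_fun_sum hxB hxB, covariance_const_mul_left,
      covariance_const_mul_right, dotProduct, mulVec, cov_apply_eq_covariance hB hB,
      Finset.mul_sum]
    exact Finset.sum_congr rfl fun i _ => Finset.sum_congr rfl fun j _ => by ring
  rw [star_trivial, hvar]
  exact integral_nonneg fun ω => mul_self_nonneg _

theorem cov_residual_of_isMoorePenrose {W : Matrix (Fin n) (Fin n) ℝ}
    (hB : ∀ i, MemLp (B i) 2 μ) (hD : ∀ j, MemLp (D j) 2 μ) (hW : IsMoorePenrose (cov μ D D) W) :
    cov μ (fun i ω => B i ω - ∑ k, (cov μ B D * W) i k * D k ω)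
        (fun i ω => B i ω - ∑ k, (cov μ B D * W) i k * D k ω)
      = cov μ B B - cov μ B D * W * cov μ D B := by
  have hK_transpose : (cov μ B D * W)ᵀ = W * cov μ D B := by
    rw [transpose_mul, hW.transpose_eq_self (cov_transpose D D), cov_transpose]
  have hWVW : cov μ B D * W * cov μ D D * (W * cov μ D B) = cov μ B D * W * cov μ D B :=
    calc _ = cov μ B D * (W * cov μ D D * W) * cov μ D B := by simp only [Matrix.mul_assoc]
      _ = _ := by rw [hW.2.1]
  rw [cov_residual _ hB hD, hK_transpose, hWVW, Matrix.mul_assoc (cov μ B D), sub_add_cancel,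
    ← Matrix.mul_assoc]

end Covariance

/-- the adjusted variance `Var_D(B) = Var(B) − Cov(B,D)·W·Cov(D,B)` is
positive semidefinite, where `W` is the Moore–Penrose inverse of `Var(D)`. -/
theorem adjVar_posSemidef [MeasurableSpace Ω] (μ : Measure Ω) [IsProbabilityMeasure μ]
    {m n : ℕ} (B : Fin m → Ω → ℝ) (D : Fin n → Ω → ℝ)
    (hB : ∀ i, Measurable (B i) ∧ MemLp (B i) 2 μ)
    (hD : ∀ i, Measurable (D i) ∧ MemLp (D i) 2 μ)
    (W : Matrix (Fin n) (Fin n) ℝ) (hW : IsMoorePenrose (cov μ D D) W) :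
    (cov μ B B - cov μ B D * W * cov μ D B).PosSemidef := by
  have hB₂ : ∀ i, MemLp (B i) 2 μ := fun i => (hB i).2
  have hD₂ : ∀ j, MemLp (D j) 2 μ := fun j => (hD j).2
  rw [← cov_residual_of_isMoorePenrose hB₂ hD₂ hW]
  exact posSemidef_cov_self fun i => (hB₂ i).sub (memLp_sum_mul _ hD₂)
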